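/- Under the hypotheses of the conditional upper bound (LDP with good rate function J, decreasing closed sets C_δ with ⋂_δ C_δ = C, J(C) < ∞, ℙ(X_n ∈ C_δ) > 0, C ⊆ int C_δ), if H ⊆ X is open and contains the (compact, nonempty) set ℋ = argmin_{x∈C} J(x) of minimizers of J on C, then limsup_{δ→0} limsup_{n→∞} (1/n) log ℙ(X_n ∉ H | X_n ∈ C_δ) < 0; in particular the conditional probability of being outside H decays exponentially. -/

import Mathlib

open MeasureTheory Filter Topology ENNReal

/-!
Write `m = J(C)` and `I(δ) = inf {J x | x ∈ Hᶜ ∩ C δ}`. Since `log (a / b) = log a - log b`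
in `EReal`, the LDP upper bound on the closed set `Hᶜ ∩ C δ` and the lower bound on the open set
`interior (C δ) ⊇ C` give `limsup_n (1/n) log ℙ(X_n ∉ H | X_n ∈ C δ) ≤ m - I(δ)`. The closed sets
`Hᶜ ∩ C δ ∩ {J ≤ m + δ}` lie in the compact sublevel set `{J ≤ m + 1}` and decrease as `δ ↓ 0`;
a point in all of them would be a minimizer of `J` on `C` outside `H`. So one of them is empty,
which gives `I(δ) > m` for all small `δ`.
-/

noncomputable def scaledLog (p : ℕ → ℝ≥0∞) (n : ℕ) : EReal :=
  ((1 / (n : ℝ) : ℝ) : EReal) * ENNReal.log (p n)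

lemma scaledLog_div (p q : ℕ → ℝ≥0∞) :
    scaledLog (fun n => p n / q n) = scaledLog p - scaledLog q := by
  funext n
  simp only [scaledLog, Pi.sub_apply]
  rw [div_eq_mul_inv (p n), log_mul_add, log_inv, ← sub_eq_add_neg,
    EReal.mul_sub_of_nonneg_of_ne_top (by exact_mod_cast by positivity) (EReal.coe_ne_top _)]

lemma scaledLog_mono {p q : ℕ → ℝ≥0∞} (h : p ≤ q) : scaledLog p ≤ scaledLog q := fun n =>
  mul_le_mul_of_nonneg_left (log_le_log (h n)) (by exact_mod_cast by positivity)

lemma EReal.limsup_sub_le {α : Type*} {f : Filter α} {u v : α → EReal}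
    (h : limsup u f ≠ ⊥ ∨ liminf v f ≠ ⊥) (h' : limsup u f ≠ ⊤ ∨ liminf v f ≠ ⊤) :
    limsup (u - v) f ≤ limsup u f - liminf v f := by
  rw [sub_eq_add_neg, sub_eq_add_neg, ← EReal.limsup_neg]
  exact EReal.limsup_add_le (by simpa [EReal.limsup_neg] using h)
    (by simpa [EReal.limsup_neg] using h')

lemma limsup_scaledLog_div_le {p q : ℕ → ℝ≥0∞} {a b : ℝ≥0∞} (hb : b ≠ ⊤)
    (hp : limsup (scaledLog p) atTop ≤ -(a : EReal))
    (hq : -(b : EReal) ≤ liminf (scaledLog q) atTop) :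
    limsup (scaledLog fun n => p n / q n) atTop ≤ -(a : EReal) - -(b : EReal) := by
  rw [scaledLog_div]
  refine (EReal.limsup_sub_le ?_ ?_).trans (EReal.sub_le_sub hp hq)
  · exact .inr (ne_bot_of_le_ne_bot (by simpa using hb) hq)
  · exact .inl (ne_top_of_le_ne_top (by simp) hp)

theorem exists_biInf_lt_biInf_compl_inter {X : Type*} [TopologicalSpace X] {J : X → ℝ≥0∞}
    (hJlsc : LowerSemicontinuous J) (hJcomp : ∀ c : ℝ≥0∞, c ≠ ⊤ → IsCompact {x : X | J x ≤ c})
    {C : ℝ → Set X} (hCcl : ∀ δ > (0:ℝ), IsClosed (C δ))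
    (hdec : ∀ δ₁ δ₂ : ℝ, 0 < δ₁ → δ₁ ≤ δ₂ → C δ₁ ⊆ C δ₂)
    {S : Set X} (hS : ⋂ (δ : ℝ) (_ : 0 < δ), C δ ⊆ S) (hJS : (⨅ x ∈ S, J x) ≠ ⊤)
    {H : Set X} (hH : IsOpen H) (hSH : {x ∈ S | J x = ⨅ y ∈ S, J y} ⊆ H) :
    ∃ δ₀ > (0:ℝ), (⨅ x ∈ S, J x) < ⨅ x ∈ Hᶜ ∩ C δ₀, J x := by
  set m := ⨅ x ∈ S, J x
  set δ : ℕ → ℝ := fun k => 1 / (k + 1)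
  set t : ℕ → Set X := fun k => Hᶜ ∩ C (δ k) ∩ {x | J x ≤ m + ENNReal.ofReal (δ k)}
  have hδ : ∀ k, 0 < δ k := fun k => Nat.one_div_pos_of_nat
  have hδ_anti : Antitone δ := fun k l hkl => Nat.one_div_le_one_div hkl
  have ht_anti : Antitone t := fun k l hkl =>
    Set.inter_subset_inter (Set.inter_subset_inter_right _ (hdec _ _ (hδ l) (hδ_anti hkl)))
      fun x (hx : J x ≤ _) => hx.trans (add_le_add le_rfl (ofReal_le_ofReal (hδ_anti hkl)))
  have ht_closed : ∀ k, IsClosed (t k) := fun k =>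
    (hH.isClosed_compl.inter (hCcl _ (hδ k))).inter (hJlsc.isClosed_preimage _)
  have ht_empty : ⋂ k, t k = ∅ := by
    refine Set.eq_empty_of_forall_notMem fun x hx => ?_
    simp only [t, Set.mem_iInter, Set.mem_inter_iff, Set.mem_ofPred_eq] at hx
    have hxS : x ∈ S := hS <| Set.mem_iInter₂.2 fun ε hε => by
      obtain ⟨k, hk⟩ := exists_nat_one_div_lt hε
      exact hdec _ _ (hδ k) hk.le (hx k).1.2
    have hδ_lim : Tendsto (fun k => m + ENNReal.ofReal (δ k)) atTop (𝓝 m) := by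
      simpa only [ofReal_zero, add_zero] using
        (ENNReal.tendsto_ofReal tendsto_one_div_add_atTop_nhds_zero_nat).const_add m
    have hJx : J x ≤ m := ge_of_tendsto' hδ_lim fun k => (hx k).2
    exact (hx 0).1.1 (hSH ⟨hxS, le_antisymm hJx (iInf₂_le x hxS)⟩)
  obtain ⟨k, hk⟩ := (hJcomp (m + 1) (add_ne_top.2 ⟨hJS, one_ne_top⟩)).elim_directed_family_closed
    t ht_closed (by rw [ht_empty, Set.inter_empty]) ht_anti.directed_ge
  refine ⟨δ k, hδ k, (ENNReal.lt_add_right hJS (ofReal_pos.2 (hδ k)).ne').trans_le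
    (le_iInf₂ fun x hx => ?_)⟩
  by_contra! hJx
  have hδ_le_one : ENNReal.ofReal (δ k) ≤ 1 :=
    ofReal_le_one.2 ((Nat.one_div_le_one_div k.zero_le).trans_eq (by norm_num))
  exact (Set.eq_empty_iff_forall_notMem.1 hk) x
    ⟨hJx.le.trans (by gcongr), ⟨hx, hJx.le⟩⟩

theorem stmt18_general {X : Type*} [TopologicalSpace X] [MeasurableSpace X]
    (μ : ℕ → Measure X)
    (J : X → ℝ≥0∞)
    -- J is a good rate function
    (hJlsc : LowerSemicontinuous J)
    (hJcomp : ∀ c : ℝ≥0∞, c ≠ ⊤ → IsCompact {x : X | J x ≤ c})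
    -- the large deviation principle
    (hupper : ∀ F : Set X, IsClosed F →
      limsup (fun n : ℕ => ((1 / (n : ℝ) : ℝ) : EReal) * ENNReal.log (μ n F)) atTop
        ≤ -(((⨅ x ∈ F, J x : ℝ≥0∞)) : EReal))
    (hlower : ∀ G : Set X, IsOpen G →
      -(((⨅ x ∈ G, J x : ℝ≥0∞)) : EReal)
        ≤ liminf (fun n : ℕ => ((1 / (n : ℝ) : ℝ) : EReal) * ENNReal.log (μ n G)) atTop)
    -- the conditioning sets
    (C : ℝ → Set X) (hCcl : ∀ δ > (0:ℝ), IsClosed (C δ))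
    (hdec : ∀ δ₁ δ₂ : ℝ, 0 < δ₁ → δ₁ ≤ δ₂ → C δ₁ ⊆ C δ₂)
    (Cset : Set X) (hCset : Cset = ⋂ (δ : ℝ) (_ : 0 < δ), C δ)
    (hJC : (⨅ x ∈ Cset, J x) ≠ ⊤)
    (hint : ∀ δ > (0:ℝ), Cset ⊆ interior (C δ))
    -- the set of minimizers of J on C and an open set H containing it
    (ℋ : Set X) (hℋ : ℋ = {x ∈ Cset | J x = ⨅ y ∈ Cset, J y})
    (H : Set X) (hH : IsOpen H) (hℋH : ℋ ⊆ H) :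
    limsup (fun δ : ℝ =>
        limsup (fun n : ℕ => ((1 / (n : ℝ) : ℝ) : EReal)
          * ENNReal.log (μ n (Hᶜ ∩ C δ) / μ n (C δ))) atTop) (𝓝[>] (0:ℝ))
      < 0 := by
  subst hℋ
  set m := ⨅ x ∈ Cset, J x
  set I : ℝ → ℝ≥0∞ := fun δ => ⨅ x ∈ Hᶜ ∩ C δ, J x
  obtain ⟨δ₀, hδ₀, hmI⟩ :=
    exists_biInf_lt_biInf_compl_inter hJlsc hJcomp hCcl hdec hCset.ge hJC hH hℋH
  have hlowerC : ∀ δ > (0:ℝ), -(m : EReal) ≤ liminf (scaledLog fun n => μ n (C δ)) atTop :=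
    fun δ hδ => calc
      -(m : EReal) ≤ -((⨅ x ∈ interior (C δ), J x : ℝ≥0∞) : EReal) :=
        EReal.neg_le_neg_iff.2 (EReal.coe_ennreal_le_coe_ennreal_iff.2
          (biInf_mono fun x hx => hint δ hδ hx))
      _ ≤ _ := hlower _ isOpen_interior
      _ ≤ _ := liminf_le_liminf (.of_forall <| scaledLog_mono fun n => measure_mono interior_subset)
  have hrate : ∀ δ ∈ Set.Ioc 0 δ₀, limsup (scaledLog fun n => μ n (Hᶜ ∩ C δ) / μ n (C δ)) atTop
      ≤ -(I δ₀ : EReal) - -(m : EReal) := fun δ ⟨hδ, hδδ₀⟩ => calc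
    _ ≤ -(I δ : EReal) - -(m : EReal) :=
      limsup_scaledLog_div_le hJC (hupper _ (hH.isClosed_compl.inter (hCcl δ hδ))) (hlowerC δ hδ)
    _ ≤ -(I δ₀ : EReal) - -(m : EReal) :=
      EReal.sub_le_sub (EReal.neg_le_neg_iff.2 (EReal.coe_ennreal_le_coe_ennreal_iff.2
        (biInf_mono fun x hx => ⟨hx.1, hdec δ δ₀ hδ hδδ₀ hx.2⟩))) le_rfl
  refine (?_ : _ ≤ -(I δ₀ : EReal) - -(m : EReal)).trans_lt ?_
  · exact limsup_le_of_le (by isBoundedDefault) (by filter_upwards [Ioc_mem_nhdsGT hδ₀] using hrate)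
  · exact (EReal.sub_neg (.inr (by simp)) (.inr (by simpa using hJC))).2
      (EReal.neg_lt_neg_iff.2 (EReal.coe_ennreal_lt_coe_ennreal_iff.2 hmI))

/-- Conditional law of large numbers (Proposition B.5): under the hypotheses of the
conditional upper bound, if `H` is open and contains the set `ℋ` of minimizers of `J`
on `C`, then `limsup_{δ→0} limsup_n (1/n) log ℙ(X_n ∉ H | X_n ∈ C δ) < 0`. -/
theorem stmt18 {X : Type*} [TopologicalSpace X] [T2Space X] [MeasurableSpace X]
    (μ : ℕ → Measure X) (hμ : ∀ n, IsProbabilityMeasure (μ n))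
    (J : X → ℝ≥0∞)
    -- J is a good rate function
    (hJlsc : LowerSemicontinuous J)
    (hJcomp : ∀ c : ℝ≥0∞, c ≠ ⊤ → IsCompact {x : X | J x ≤ c})
    -- the large deviation principle
    (hupper : ∀ F : Set X, IsClosed F →
      limsup (fun n : ℕ => ((1 / (n : ℝ) : ℝ) : EReal) * ENNReal.log (μ n F)) atTop
        ≤ -(((⨅ x ∈ F, J x : ℝ≥0∞)) : EReal))
    (hlower : ∀ G : Set X, IsOpen G →
      -(((⨅ x ∈ G, J x : ℝ≥0∞)) : EReal)
        ≤ liminf (fun n : ℕ => ((1 / (n : ℝ) : ℝ) : EReal) * ENNReal.log (μ n G)) atTop)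
    -- the conditioning sets
    (C : ℝ → Set X) (hCcl : ∀ δ > (0:ℝ), IsClosed (C δ))
    (hdec : ∀ δ₁ δ₂ : ℝ, 0 < δ₁ → δ₁ ≤ δ₂ → C δ₁ ⊆ C δ₂)
    (Cset : Set X) (hCset : Cset = ⋂ (δ : ℝ) (_ : 0 < δ), C δ) (hCsetcl : IsClosed Cset)
    (hJC : (⨅ x ∈ Cset, J x) ≠ ⊤)
    (hpos : ∀ n : ℕ, ∀ δ > (0:ℝ), 0 < μ n (C δ))
    (hint : ∀ δ > (0:ℝ), Cset ⊆ interior (C δ))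
    -- the set of minimizers of J on C and an open set H containing it
    (ℋ : Set X) (hℋ : ℋ = {x ∈ Cset | J x = ⨅ y ∈ Cset, J y})
    (H : Set X) (hH : IsOpen H) (hℋH : ℋ ⊆ H) :
    limsup (fun δ : ℝ =>
        limsup (fun n : ℕ => ((1 / (n : ℝ) : ℝ) : EReal)
          * ENNReal.log (μ n (Hᶜ ∩ C δ) / μ n (C δ))) atTop) (𝓝[>] (0:ℝ))
      < 0 :=
  stmt18_general μ J hJlsc hJcomp hupper hlower C hCcl hdec Cset hCset hJC hint ℋ hℋ H hH hℋH
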